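/- General ideal-filter channel as circular convolution: let N, M, B be positive integers with B dividing N, let α ∈ ℂ, and suppose the per-symbol channel gains are H[n,m] = α·exp(2πi a n)·exp(−2πi c_{⌊nB/N⌋} m), where a ∈ ℝ and c_0,…,c_{B−1} ∈ ℝ are constants (c_b constant over each block of N/B consecutive symbol intervals). For delay-Doppler symbols X with ISFFT X_TF, define Y_TF[n,m] = H[n,m]·X_TF[n,m] and let Y_DD be its SFFT. Then Y_DD[k,l] = α · Σ_{k'=0}^{N-1} Σ_{l'=0}^{M-1} X[k',l']·Φ[k−k', l−l'], where Φ[k,l] = (1/B) Σ_{b=0}^{B-1} exp(−2πi (k/N − a)·bN/B) · D_{N/B}(k/N − a) · D_M(−(l/M − c_b)), with D_Q(ν) = (1/Q) Σ_{q=0}^{Q-1} exp(−2πi ν q). -/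

import Mathlib

/-!
Substituting the ISFFT into the SFFT and exchanging the four sums shows that any per-symbol
gain `H` acts in the delay-Doppler domain as a circular convolution with its normalized
symplectic Fourier transform `spreading N M H`. For the stop-and-go gain, write
`n = b (N / B) + q`: then `⌊n B / N⌋ = b`, so the delay is constant on each block and the
block's double sum over `q, m` factors into a phase times two geometric sums, i.e. two
Dirichlet kernels. This is exactly the `b`-th term of `Phi`.
-/

open Complex Finset

/-- The periodic sinc (Dirichlet) function of degree `Q`. -/
noncomputable def dirichlet (Q : ℕ) (ν : ℝ) : ℂ :=
  (1 / (Q : ℂ)) * ∑ q ∈ Finset.range Q, Complex.exp (-2 * Real.pi * Complex.I * ν * q)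

/-- The delay-Doppler spreading sequence of Proposition 2 (ideal shaping filters,
`B`-fold stop-and-go approximation), for normalized Doppler `a` and per-block
normalized delays `c b`. -/
noncomputable def Phi (N M B : ℕ) (a : ℝ) (c : ℕ → ℝ) (k l : ℤ) : ℂ :=
  (1 / (B : ℂ)) * ∑ b ∈ Finset.range B,
    Complex.exp (-2 * Real.pi * Complex.I * (((k : ℝ) / N - a : ℝ) : ℂ) *
        (((b * (N / B) : ℕ) : ℂ))) *
      dirichlet (N / B) ((k : ℝ) / N - a) *
      dirichlet M (-((l : ℝ) / M - c b))

theorem Finset.sum_range_mul_eq_sum_sum {β : Type*} [AddCommMonoid β] (B Q : ℕ)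
    (f : ℕ → β) :
    ∑ n ∈ range (B * Q), f n = ∑ b ∈ range B, ∑ q ∈ range Q, f (b * Q + q) := by
  induction B with
  | zero => simp
  | succ B ih => rw [Nat.succ_mul, sum_range_succ, ← ih, sum_range_add]

noncomputable def isfft (N M : ℕ) (X : ℕ → ℕ → ℂ) (n m : ℕ) : ℂ :=
  (1 / (Real.sqrt (N * M) : ℂ)) * ∑ k ∈ range N, ∑ l ∈ range M,
    X k l * Complex.exp (2 * Real.pi * I * ((n : ℂ) * k / N - (m : ℂ) * l / M))

noncomputable def sfft (N M : ℕ) (Y : ℕ → ℕ → ℂ) (k l : ℕ) : ℂ :=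
  (1 / (Real.sqrt (N * M) : ℂ)) * ∑ n ∈ range N, ∑ m ∈ range M,
    Y n m * Complex.exp (-2 * Real.pi * I * ((n : ℂ) * k / N - (m : ℂ) * l / M))

noncomputable def spreading (N M : ℕ) (H : ℕ → ℕ → ℂ) (K L : ℤ) : ℂ :=
  1 / ((N : ℂ) * M) * ∑ n ∈ range N, ∑ m ∈ range M,
    H n m * Complex.exp (-2 * Real.pi * I * ((n : ℂ) * K / N - (m : ℂ) * L / M))

noncomputable def stopAndGoGain (N B : ℕ) (α : ℂ) (a : ℝ) (c : ℕ → ℝ)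
    (n m : ℕ) : ℂ :=
  α * Complex.exp (2 * Real.pi * I * (a : ℂ) * (n : ℂ)) *
    Complex.exp (-2 * Real.pi * I * ((c (n * B / N) : ℝ) : ℂ) * (m : ℂ))

lemma sfft_mul_isfft (N M : ℕ) (H X : ℕ → ℕ → ℂ) (k l : ℕ) :
    sfft N M (fun n m => H n m * isfft N M X n m) k l =
      ∑ k' ∈ range N, ∑ l' ∈ range M, X k' l' * spreading N M H (k - k') (l - l') := by
  have hnorm :
      (1 / (Real.sqrt (N * M) : ℂ)) * (1 / (Real.sqrt (N * M) : ℂ)) = 1 / ((N : ℂ) * M) := by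
    rw [div_mul_div_comm, one_mul, ← Complex.ofReal_mul, Real.mul_self_sqrt (by positivity)]
    simp
  have hphase (n m k' l' : ℕ) :
      Complex.exp (2 * Real.pi * I * ((n : ℂ) * k' / N - (m : ℂ) * l' / M)) *
          Complex.exp (-2 * Real.pi * I * ((n : ℂ) * k / N - (m : ℂ) * l / M)) =
        Complex.exp (-2 * Real.pi * I *
          ((n : ℂ) * ((k - k' : ℤ) : ℂ) / N - (m : ℂ) * ((l - l' : ℤ) : ℂ) / M)) := by
    rw [← Complex.exp_add]
    congr 1
    push_cast
    ring
  simp only [sfft, isfft, spreading, mul_sum, sum_mul]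
  -- reorder `∑ n, ∑ m, ∑ k', ∑ l'` into `∑ k', ∑ l', ∑ n, ∑ m`
  refine (sum_congr rfl fun n _ => sum_comm).trans ?_
  rw [sum_comm]
  refine sum_congr rfl fun k' _ => ?_
  refine (sum_congr rfl fun n _ => sum_comm).trans sum_comm |>.trans ?_
  refine sum_congr rfl fun l' _ => sum_congr rfl fun n _ => sum_congr rfl fun m _ => ?_
  rw [← hnorm, ← hphase]
  ring

lemma block_index_eq {B Q b q : ℕ} (hB : 0 < B) (hq : q < Q) :
    (b * Q + q) * B / (B * Q) = b := by
  rw [mul_comm B Q, Nat.mul_div_mul_right _ _ hB, Nat.add_comm,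
    Nat.add_mul_div_right _ _ (by omega), Nat.div_eq_of_lt hq, zero_add]

lemma exp_mul_dirichlet_mul_dirichlet (s Q M : ℕ) (ν μ : ℝ) :
    Complex.exp (-2 * Real.pi * I * ν * s) * dirichlet Q ν * dirichlet M μ =
      1 / ((Q : ℂ) * M) * ∑ q ∈ range Q, ∑ m ∈ range M,
        Complex.exp (-2 * Real.pi * I * ν * ((s + q : ℕ) : ℂ)) *
          Complex.exp (-2 * Real.pi * I * μ * m) := by
  simp only [dirichlet, mul_sum, sum_mul, Nat.cast_add, mul_add, Complex.exp_add]
  rw [sum_comm]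
  refine sum_congr rfl fun q _ => sum_congr rfl fun m _ => ?_
  ring

lemma Phi_eq_sum {N M B : ℕ} (hBN : B ∣ N) (a : ℝ) (c : ℕ → ℝ) (K L : ℤ) :
    Phi N M B a c K L = 1 / ((N : ℂ) * M) * ∑ n ∈ range N, ∑ m ∈ range M,
      Complex.exp (-2 * Real.pi * I * (((K : ℝ) / N - a : ℝ) : ℂ) * n) *
        Complex.exp (2 * Real.pi * I * (((L : ℝ) / M - c (n * B / N) : ℝ) : ℂ) * m) := by
  obtain ⟨Q, rfl⟩ := hBN
  rcases B.eq_zero_or_pos with rfl | hB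
  · simp [Phi]
  rw [Phi, Nat.mul_div_cancel_left Q hB, sum_range_mul_eq_sum_sum, mul_sum, mul_sum]
  refine sum_congr rfl fun b _ => ?_
  rw [exp_mul_dirichlet_mul_dirichlet, ← mul_assoc]
  congr 1
  · push_cast
    ring
  refine sum_congr rfl fun q hq => sum_congr rfl fun m _ => ?_
  rw [block_index_eq hB (mem_range.mp hq)]
  congr 2
  push_cast
  ring

lemma spreading_stopAndGoGain {N M B : ℕ} (hBN : B ∣ N) (α : ℂ) (a : ℝ) (c : ℕ → ℝ)
    (K L : ℤ) :
    spreading N M (stopAndGoGain N B α a c) K L = α * Phi N M B a c K L := by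
  rw [Phi_eq_sum hBN, spreading, mul_left_comm α]
  congr 1
  simp only [mul_sum]
  refine sum_congr rfl fun n _ => sum_congr rfl fun m _ => ?_
  simp only [stopAndGoGain, mul_assoc, ← Complex.exp_add]
  congr 2
  push_cast
  ring

theorem stmt11_general (N M B : ℕ) (hBN : B ∣ N)
    (α : ℂ) (a : ℝ) (c : ℕ → ℝ) (X : ℕ → ℕ → ℂ) (k l : ℕ) :
    (1 / (Real.sqrt (N * M) : ℂ)) * ∑ n ∈ Finset.range N, ∑ m ∈ Finset.range M,
        ((α * Complex.exp (2 * Real.pi * Complex.I * (a : ℂ) * (n : ℂ)) *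
            Complex.exp (-2 * Real.pi * Complex.I * ((c (n * B / N) : ℝ) : ℂ) * (m : ℂ))) *
          ((1 / (Real.sqrt (N * M) : ℂ)) * ∑ k' ∈ Finset.range N, ∑ l' ∈ Finset.range M,
            X k' l' *
              Complex.exp (2 * Real.pi * Complex.I *
                ((n : ℂ) * (k' : ℂ) / (N : ℂ) - (m : ℂ) * (l' : ℂ) / (M : ℂ))))) *
          Complex.exp (-2 * Real.pi * Complex.I *
            ((n : ℂ) * (k : ℂ) / (N : ℂ) - (m : ℂ) * (l : ℂ) / (M : ℂ))) =
      α * ∑ k' ∈ Finset.range N, ∑ l' ∈ Finset.range M,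
        X k' l' * Phi N M B a c ((k : ℤ) - (k' : ℤ)) ((l : ℤ) - (l' : ℤ)) := by
  refine (sfft_mul_isfft N M (stopAndGoGain N B α a c) X k l).trans ?_
  simp only [spreading_stopAndGoGain hBN, mul_sum, mul_left_comm α]

theorem stmt11 (N M B : ℕ) (hN : 0 < N) (hM : 0 < M) (hB : 0 < B) (hBN : B ∣ N)
    (α : ℂ) (a : ℝ) (c : ℕ → ℝ) (X : ℕ → ℕ → ℂ) (k l : ℕ) (hk : k < N) (hl : l < M) :
    (1 / (Real.sqrt (N * M) : ℂ)) * ∑ n ∈ Finset.range N, ∑ m ∈ Finset.range M,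
        ((α * Complex.exp (2 * Real.pi * Complex.I * (a : ℂ) * (n : ℂ)) *
            Complex.exp (-2 * Real.pi * Complex.I * ((c (n * B / N) : ℝ) : ℂ) * (m : ℂ))) *
          ((1 / (Real.sqrt (N * M) : ℂ)) * ∑ k' ∈ Finset.range N, ∑ l' ∈ Finset.range M,
            X k' l' *
              Complex.exp (2 * Real.pi * Complex.I *
                ((n : ℂ) * (k' : ℂ) / (N : ℂ) - (m : ℂ) * (l' : ℂ) / (M : ℂ))))) *
          Complex.exp (-2 * Real.pi * Complex.I *
            ((n : ℂ) * (k : ℂ) / (N : ℂ) - (m : ℂ) * (l : ℂ) / (M : ℂ))) =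
      α * ∑ k' ∈ Finset.range N, ∑ l' ∈ Finset.range M,
        X k' l' * Phi N M B a c ((k : ℤ) - (k' : ℤ)) ((l : ℤ) - (l' : ℤ)) :=
  stmt11_general N M B hBN α a c X k l
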